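/- arXiv:0902.2996 — 3 statements merged into one kernel-verified Lean document; each statement's English description precedes it below -/
import Mathlib

section
/- Let C_∞ and C_n (n ≥ 1) be bivariate copulas on [0,1]^2, with C_∞ continuous, and suppose C_n converges weakly to C_∞. Then ∫_{[0,1]^2} C_n(u−, v−) dC_n(u,v) → ∫_{[0,1]^2} C_∞(u,v) dC_∞(u,v) as n → ∞. -/
open MeasureTheory Filter Set

noncomputable section

/-- A (bivariate) copula, viewed as a probability measure `ν` on `ℝ × ℝ` carried by `[0,1]²`
whose two one-dimensional marginals are uniform on `[0,1]`. -/
def IsCopulaMeasure (ν : Measure (ℝ × ℝ)) : Prop :=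
  IsProbabilityMeasure ν ∧
  ν ((Set.Icc (0 : ℝ) 1 ×ˢ Set.Icc (0 : ℝ) 1)ᶜ) = 0 ∧
  Measure.map Prod.fst ν = volume.restrict (Set.Icc (0 : ℝ) 1) ∧
  Measure.map Prod.snd ν = volume.restrict (Set.Icc (0 : ℝ) 1)

/-- The distribution function `C(u,v) = ν((-∞,u] × (-∞,v])` of a copula measure `ν`. -/
def copulaCDF (ν : Measure (ℝ × ℝ)) (p : ℝ × ℝ) : ℝ :=
  (ν (Set.Iic p.1 ×ˢ Set.Iic p.2)).toReal

/-- The left limit `C(u-,v-) = ν((-∞,u) × (-∞,v))` of the distribution function of a copula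
measure `ν`. -/
def copulaCDFLeft (ν : Measure (ℝ × ℝ)) (p : ℝ × ℝ) : ℝ :=
  (ν (Set.Iio p.1 ×ˢ Set.Iio p.2)).toReal

/-!
Uniform marginals make every copula distribution function `2`-Lipschitz and make every
horizontal and vertical line null, so `C_n(u-,v-) = C_n(u,v)` and, by the portmanteau theorem,
`C_n → C_∞` pointwise. Equicontinuity upgrades this to uniform convergence on `[0,1]²`, which
carries every `C_n`, so `∫ (C_n - C_∞) dC_n → 0`; finally `∫ C_∞ dC_n → ∫ C_∞ dC_∞` because
`C_∞` is bounded and continuous.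
-/

open Topology

lemma tendsto_integral_sub_of_tendstoUniformlyOn {X ι : Type*} [MeasurableSpace X] {l : Filter ι}
    {μ : ι → Measure X} [∀ i, IsProbabilityMeasure (μ i)] {K : Set X} (hK : ∀ i, μ i Kᶜ = 0)
    {F : ι → X → ℝ} {f : X → ℝ} (hF : TendstoUniformlyOn F f l K) :
    Tendsto (fun i => ∫ x, (F i x - f x) ∂μ i) l (𝓝 0) := by
  refine Metric.tendsto_nhds.2 fun ε hε => ?_
  filter_upwards [Metric.tendstoUniformlyOn_iff.1 hF (ε / 2) (half_pos hε)] with i hi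
  have hbound : ∀ᵐ x ∂μ i, ‖F i x - f x‖ ≤ ε / 2 := by
    filter_upwards [mem_ae_iff.2 (hK i)] with x hx
    rw [← dist_eq_norm, dist_comm]
    exact (hi x hx).le
  rw [dist_zero_right]
  calc ‖∫ x, (F i x - f x) ∂μ i‖ ≤ ε / 2 * (μ i).real univ :=
        norm_integral_le_of_norm_le_const hbound
    _ < ε := by rw [probReal_univ]; linarith

namespace IsCopulaMeasure

variable {ν : Measure (ℝ × ℝ)}

lemma measure_prod_univ_le (hν : IsCopulaMeasure ν) {s : Set ℝ} (hs : MeasurableSet s) :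
    ν (s ×ˢ univ) ≤ volume s := by
  rw [prod_univ, ← Measure.map_apply measurable_fst hs, hν.2.2.1]
  exact Measure.restrict_le_self _

lemma measure_univ_prod_le (hν : IsCopulaMeasure ν) {s : Set ℝ} (hs : MeasurableSet s) :
    ν (univ ×ˢ s) ≤ volume s := by
  rw [univ_prod, ← Measure.map_apply measurable_snd hs, hν.2.2.2]
  exact Measure.restrict_le_self _

lemma measure_frontier_Iic_prod_Iic (hν : IsCopulaMeasure ν) (a b : ℝ) :
    ν (frontier (Iic a ×ˢ Iic b)) = 0 := by
  simp only [frontier_prod_eq, closure_Iic, frontier_Iic]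
  refine measure_union_null (le_zero_iff.1 ?_) (le_zero_iff.1 ?_)
  · calc ν (Iic a ×ˢ {b}) ≤ ν (univ ×ˢ {b}) := measure_mono (prod_mono (subset_univ _) le_rfl)
      _ ≤ volume {b} := hν.measure_univ_prod_le (measurableSet_singleton b)
      _ = 0 := Real.volume_singleton
  · calc ν ({a} ×ˢ Iic b) ≤ ν ({a} ×ˢ univ) := measure_mono (prod_mono le_rfl (subset_univ _))
      _ ≤ volume {a} := hν.measure_prod_univ_le (measurableSet_singleton a)
      _ = 0 := Real.volume_singleton

lemma copulaCDFLeft_eq (hν : IsCopulaMeasure ν) : copulaCDFLeft ν = copulaCDF ν := by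
  ext p
  rw [copulaCDFLeft, copulaCDF, ← interior_Iic, ← interior_Iic, ← interior_prod_eq,
    measure_interior_of_null_frontier (hν.measure_frontier_Iic_prod_Iic _ _)]

lemma copulaCDF_sub_le (hν : IsCopulaMeasure ν) (p q : ℝ × ℝ) :
    copulaCDF ν p - copulaCDF ν q ≤ |p.1 - q.1| + |p.2 - q.2| := by
  have := hν.1
  have strip_fst : ν.real (Ioc q.1 p.1 ×ˢ univ) ≤ |p.1 - q.1| := by
    calc ν.real (Ioc q.1 p.1 ×ˢ univ) ≤ volume.real (Ioc q.1 p.1) :=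
          ENNReal.toReal_mono measure_Ioc_lt_top.ne (hν.measure_prod_univ_le measurableSet_Ioc)
      _ ≤ |p.1 - q.1| := by rw [Real.volume_real_Ioc]; exact max_le (le_abs_self _) (abs_nonneg _)
  have strip_snd : ν.real (univ ×ˢ Ioc q.2 p.2) ≤ |p.2 - q.2| := by
    calc ν.real (univ ×ˢ Ioc q.2 p.2) ≤ volume.real (Ioc q.2 p.2) :=
          ENNReal.toReal_mono measure_Ioc_lt_top.ne (hν.measure_univ_prod_le measurableSet_Ioc)
      _ ≤ |p.2 - q.2| := by rw [Real.volume_real_Ioc]; exact max_le (le_abs_self _) (abs_nonneg _)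
  calc copulaCDF ν p - copulaCDF ν q
      ≤ ν.real (Iic p.1 ×ˢ Iic p.2 \ Iic q.1 ×ˢ Iic q.2) := le_measureReal_sdiff
    _ ≤ ν.real (univ ×ˢ Ioc q.2 p.2) + ν.real (Ioc q.1 p.1 ×ˢ univ) := by
        rw [prod_sdiff_prod, Iic_sdiff_Iic, Iic_sdiff_Iic]
        exact (measureReal_mono (union_subset_union (prod_mono (subset_univ _) le_rfl)
          (prod_mono le_rfl (subset_univ _)))).trans (measureReal_union_le _ _)
    _ ≤ |p.1 - q.1| + |p.2 - q.2| := by linarith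

lemma lipschitzWith_copulaCDF (hν : IsCopulaMeasure ν) : LipschitzWith 2 (copulaCDF ν) := by
  refine LipschitzWith.of_dist_le_mul fun p q => ?_
  have h₁ : |p.1 - q.1| ≤ dist p q := (Real.dist_eq _ _).symm.trans_le (le_max_left _ _)
  have h₂ : |p.2 - q.2| ≤ dist p q := (Real.dist_eq _ _).symm.trans_le (le_max_right _ _)
  rw [Real.dist_eq, abs_sub_le_iff]
  have hpq := hν.copulaCDF_sub_le p q
  have hqp := hν.copulaCDF_sub_le q p
  rw [abs_sub_comm q.1, abs_sub_comm q.2] at hqp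
  push_cast
  constructor <;> linarith

lemma norm_copulaCDF_le_one (hν : IsCopulaMeasure ν) (p : ℝ × ℝ) : ‖copulaCDF ν p‖ ≤ 1 := by
  have := hν.1
  rw [copulaCDF, Real.norm_of_nonneg ENNReal.toReal_nonneg]
  exact measureReal_le_one

def cdfBCF (hν : IsCopulaMeasure ν) : BoundedContinuousFunction (ℝ × ℝ) ℝ :=
  .ofNormedAddCommGroup (copulaCDF ν) hν.lipschitzWith_copulaCDF.continuous 1
    hν.norm_copulaCDF_le_one

@[simp]
lemma coe_cdfBCF (hν : IsCopulaMeasure ν) : ⇑hν.cdfBCF = copulaCDF ν := rfl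

lemma integrable_copulaCDF (hν : IsCopulaMeasure ν) (μ : Measure (ℝ × ℝ)) [IsFiniteMeasure μ] :
    Integrable (copulaCDF ν) μ :=
  hν.cdfBCF.integrable μ

end IsCopulaMeasure

section WeakConvergence

variable {ι : Type*} {l : Filter ι} {ν : ι → Measure (ℝ × ℝ)} {νlim : Measure (ℝ × ℝ)}

lemma tendsto_copulaCDF_of_tendsto_integral
    (hν : ∀ i, IsCopulaMeasure (ν i)) (hνlim : IsCopulaMeasure νlim)
    (hweak : ∀ f : BoundedContinuousFunction (ℝ × ℝ) ℝ,
      Tendsto (fun i => ∫ p, f p ∂(ν i)) l (𝓝 (∫ p, f p ∂νlim)))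
    (p : ℝ × ℝ) :
    Tendsto (fun i => copulaCDF (ν i) p) l (𝓝 (copulaCDF νlim p)) := by
  let P : ι → ProbabilityMeasure (ℝ × ℝ) := fun i => ⟨ν i, (hν i).1⟩
  let Plim : ProbabilityMeasure (ℝ × ℝ) := ⟨νlim, hνlim.1⟩
  have hP : Tendsto P l (𝓝 Plim) :=
    ProbabilityMeasure.tendsto_iff_forall_integral_tendsto.2 hweak
  exact (ENNReal.tendsto_toReal (measure_ne_top (Plim : Measure (ℝ × ℝ)) _)).comp
    (ProbabilityMeasure.tendsto_measure_of_null_frontier_of_tendsto' hP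
      (hνlim.measure_frontier_Iic_prod_Iic p.1 p.2))

lemma tendstoUniformlyOn_copulaCDF_of_tendsto_integral
    (hν : ∀ i, IsCopulaMeasure (ν i)) (hνlim : IsCopulaMeasure νlim)
    (hweak : ∀ f : BoundedContinuousFunction (ℝ × ℝ) ℝ,
      Tendsto (fun i => ∫ p, f p ∂(ν i)) l (𝓝 (∫ p, f p ∂νlim)))
    {K : Set (ℝ × ℝ)} (hK : IsCompact K) :
    TendstoUniformlyOn (fun i => copulaCDF (ν i)) (copulaCDF νlim) l K := by
  have hequi : Equicontinuous fun i => copulaCDF (ν i) :=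
    (LipschitzWith.uniformEquicontinuous _ 2 fun i =>
      (hν i).lipschitzWith_copulaCDF).equicontinuous
  have hunif := (EquicontinuousOn.tendsto_uniformOnFun_iff_pi (𝔖 := {K | IsCompact K})
    (fun _ hK => hK) (sUnion_eq_univ_iff.2 fun p => ⟨{p}, isCompact_singleton, rfl⟩)
    (fun K _ => hequi.equicontinuousOn K) l (copulaCDF νlim)).2
    (tendsto_pi_nhds.2 (tendsto_copulaCDF_of_tendsto_integral hν hνlim hweak))
  exact UniformOnFun.tendsto_iff_tendstoUniformlyOn.1 hunif K hK

end WeakConvergence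

theorem copula_integral_convergence_general
    (ν : ℕ → Measure (ℝ × ℝ)) (νlim : Measure (ℝ × ℝ))
    (hν : ∀ n, IsCopulaMeasure (ν n)) (hνlim : IsCopulaMeasure νlim)
    (hweak : ∀ f : BoundedContinuousFunction (ℝ × ℝ) ℝ,
      Tendsto (fun n => ∫ p, f p ∂(ν n)) atTop (nhds (∫ p, f p ∂νlim))) :
    Tendsto (fun n => ∫ p, copulaCDFLeft (ν n) p ∂(ν n)) atTop
      (nhds (∫ p, copulaCDF νlim p ∂νlim)) := by
  have := fun n => (hν n).1
  have hsplit : ∀ n, ∫ p, copulaCDFLeft (ν n) p ∂(ν n) =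
      ∫ p, (copulaCDF (ν n) p - copulaCDF νlim p) ∂(ν n) + ∫ p, copulaCDF νlim p ∂(ν n) := by
    intro n
    rw [(hν n).copulaCDFLeft_eq, integral_sub ((hν n).integrable_copulaCDF _)
      (hνlim.integrable_copulaCDF _), sub_add_cancel]
  have hdiff := tendsto_integral_sub_of_tendstoUniformlyOn (fun n => (hν n).2.1)
    (tendstoUniformlyOn_copulaCDF_of_tendsto_integral hν hνlim hweak
      (isCompact_Icc.prod isCompact_Icc))
  simpa [hsplit] using hdiff.add (hweak hνlim.cdfBCF)

/-- Lemma 2.6: if copulas `C_n` converge weakly to a continuous copula `C_∞`, then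
`∫ C_n(u-,v-) dC_n(u,v) → ∫ C_∞(u,v) dC_∞(u,v)`. -/
theorem copula_integral_convergence
    (ν : ℕ → Measure (ℝ × ℝ)) (νlim : Measure (ℝ × ℝ))
    (hν : ∀ n, IsCopulaMeasure (ν n)) (hνlim : IsCopulaMeasure νlim)
    (hcont : Continuous (copulaCDF νlim))
    (hweak : ∀ f : BoundedContinuousFunction (ℝ × ℝ) ℝ,
      Tendsto (fun n => ∫ p, f p ∂(ν n)) atTop (nhds (∫ p, f p ∂νlim))) :
    Tendsto (fun n => ∫ p, copulaCDFLeft (ν n) p ∂(ν n)) atTop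
      (nhds (∫ p, copulaCDF νlim p ∂νlim)) :=
  copula_integral_convergence_general ν νlim hν hνlim hweak
end
end

section
/- Let H be a continuous probability distribution function on ℝ, let ρ ∈ ℝ and D ∈ ℝ, and define ψ_1(c) = c^ρ and ψ_2(c) = D·log c if ρ = 0 and ψ_2(c) = D(c^ρ − 1)/ρ if ρ ≠ 0. Define I = ∫_1^∞ ∫_1^∞ y^{−1} H(ψ_1(1/y) H^←(1/x) + ψ_2(1/y)) (dx/x)(dy/y) and Ĩ = ∫_1^∞ ∫_1^∞ y^{−1} [1 − H(ψ_1(1/y) H^←(1 − 1/x) + ψ_2(1/y))] (dx/x)(dy/y). Then I = 1 and Ĩ = 1 if and only if ρ = 0 and D = 0. -/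
/-!
Write `ψ(y, t) = ψ₁(1/y) t + ψ₂(1/y)` and `Δ(t) = ∫_1^∞ y⁻² (H(ψ(y, t)) - H(t)) dy`. Since
`∫_1^∞ y⁻² dy = 1` and `H(H^←(p)) = p` on `(0, 1)`, the conditions `I = 1` and `Ĩ = 1` say that
`p ↦ Δ(H^←(p))` has vanishing moments against `dp/p` and `dp/(1 - p)` on `(0, 1)`.

Unless `ρ = D = 0`, every map `t ↦ ψ(y, t)` pushes all points towards, or all points away from,
the common fixed point `-D/ρ` (for `ρ = 0`: all points in the same direction). Since `H` is
monotone, `Δ(H^←(p))` therefore changes sign at most once, at some `p₀`, and the combination of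
the two moments with weight `(p - p₀)/(p(1 - p))` forces `Δ(H^←(p)) = 0` for almost every `p`.
For such `p`, `H(ψ(y, H^←(p))) = p` for almost every `y`; letting `y → ∞` gives
`p ∈ {0, 1, H(-D/ρ)}`, which fails for almost every `p`.
-/

open Filter Set

noncomputable section

/-- The left-continuous inverse `G^←(p) = inf {x | G(x) ≥ p}` of a distribution function. -/
def leftInv (G : ℝ → ℝ) (p : ℝ) : ℝ := sInf {x : ℝ | p ≤ G x}

open MeasureTheory Topology

section DistributionFunction

variable {H : ℝ → ℝ}

lemma bddBelow_setOf_le_apply (h0 : Tendsto H atBot (𝓝 0)) {p : ℝ} (hp : 0 < p) :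
    BddBelow {x | p ≤ H x} := by
  obtain ⟨a, ha⟩ := (h0.eventually_lt_const hp).exists_forall_of_atBot
  exact ⟨a, fun x hx => le_of_not_gt fun hxa => (ha x hxa.le).not_ge hx⟩

lemma leftInv_le (h0 : Tendsto H atBot (𝓝 0)) {p x : ℝ} (hp : 0 < p) (hx : p ≤ H x) :
    leftInv H p ≤ x :=
  csInf_le (bddBelow_setOf_le_apply h0 hp) hx

lemma apply_leftInv (hmono : Monotone H) (hcont : Continuous H)
    (h0 : Tendsto H atBot (𝓝 0)) (h1 : Tendsto H atTop (𝓝 1)) {p : ℝ} (hp : p ∈ Ioo 0 1) :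
    H (leftInv H p) = p := by
  obtain ⟨a, ha⟩ := (h0.eventually_lt_const hp.1).exists
  obtain ⟨b, hb⟩ := (h1.eventually_const_lt hp.2).exists
  obtain ⟨x, rfl⟩ := intermediate_value_univ a b hcont ⟨ha.le, hb.le⟩
  refine le_antisymm (hmono (leftInv_le h0 hp.1 le_rfl)) ?_
  exact (isClosed_le continuous_const hcont).csInf_mem ⟨x, show H x ≤ H x from le_rfl⟩
    (bddBelow_setOf_le_apply h0 hp.1)

lemma abs_apply_sub_le_one (hmono : Monotone H) (h0 : Tendsto H atBot (𝓝 0))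
    (h1 : Tendsto H atTop (𝓝 1)) (a b : ℝ) : |H a - H b| ≤ 1 := by
  have := hmono.le_of_tendsto h0 a
  have := hmono.le_of_tendsto h0 b
  have := hmono.ge_of_tendsto h1 a
  have := hmono.ge_of_tendsto h1 b
  rw [abs_le]
  constructor <;> linarith

lemma Monotone.mul_sub_nonneg (hH : Monotone H) {κ a b : ℝ} (h : 0 ≤ κ * (a - b)) :
    0 ≤ κ * (H a - H b) := by
  rcases lt_trichotomy a b with hab | rfl | hab
  · have hκ : κ ≤ 0 := by nlinarith
    nlinarith [hH hab.le]
  · simp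
  · have hκ : 0 ≤ κ := by nlinarith
    nlinarith [hH hab.le]

lemma Monotone.mul_sub_mul_sub_nonneg (hH : Monotone H) {κ a b c d : ℝ}
    (h : 0 ≤ κ * (a - b) * (c - d)) : 0 ≤ κ * (H a - H b) * (H c - H d) := by
  have h' : 0 ≤ κ * (c - d) * (H a - H b) := hH.mul_sub_nonneg (by linarith)
  exact hH.mul_sub_nonneg (by linarith)

end DistributionFunction

lemma ae_eq_zero_of_integral_mul_eq_zero {α : Type*} [MeasurableSpace α] {μ : Measure α}
    {w u : α → ℝ} (hw : ∀ᵐ x ∂μ, 0 < w x) (hu : ∀ᵐ x ∂μ, 0 ≤ u x)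
    (hint : Integrable (fun x => w x * u x) μ) (h : ∫ x, w x * u x ∂μ = 0) :
    ∀ᵐ x ∂μ, u x = 0 := by
  have hnonneg : 0 ≤ᵐ[μ] fun x => w x * u x := by
    filter_upwards [hw, hu] with x hwx hux using mul_nonneg hwx.le hux
  filter_upwards [(integral_eq_zero_iff_of_nonneg_ae hnonneg hint).1 h, hw] with x hx hwx
  exact (mul_eq_zero.1 hx).resolve_left hwx.ne'

lemma ae_inv_notMem {S : Set ℝ} (hS : S.Finite) : ∀ᵐ s : ℝ, s⁻¹ ∉ S :=
  measure_eq_zero_iff_ae_notMem.1 ((hS.preimage inv_injective.injOn).measure_zero volume)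

lemma frequently_atTop_of_ae_restrict_Ioi {P : ℝ → Prop} {a : ℝ}
    (h : ∀ᵐ y ∂volume.restrict (Ioi a), P y) : ∃ᶠ y in atTop, P y := by
  refine frequently_atTop.2 fun b => ?_
  have : (ae (volume.restrict (Ioi (max a b)))).NeBot := ae_neBot.2 <| by
    rw [Ne, Measure.restrict_eq_zero, Real.volume_Ioi]
    exact ENNReal.top_ne_zero
  obtain ⟨y, hy, hyb⟩ := ((ae_restrict_of_ae_restrict_of_subset
    (Ioi_subset_Ioi (le_max_left a b)) h).and (ae_restrict_mem measurableSet_Ioi)).exists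
  exact ⟨y, (le_max_right a b).trans hyb.le, hy⟩

section Weight

lemma inv_mul_inv_eq_rpow {y : ℝ} (hy : 0 < y) : y⁻¹ * y⁻¹ = y ^ (-2 : ℝ) := by
  rw [Real.rpow_neg hy.le, Real.rpow_two, sq, mul_inv]

lemma integrableOn_inv_mul_inv : IntegrableOn (fun y : ℝ => y⁻¹ * y⁻¹) (Ioi 1) :=
  (integrableOn_Ioi_rpow_of_lt (by norm_num) one_pos).congr_fun
    (fun _ hy => (inv_mul_inv_eq_rpow (one_pos.trans hy)).symm) measurableSet_Ioi

lemma integral_inv_mul_inv : ∫ y in Ioi (1 : ℝ), y⁻¹ * y⁻¹ = 1 := by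
  rw [setIntegral_congr_fun measurableSet_Ioi fun _ hy => inv_mul_inv_eq_rpow (one_pos.trans hy),
    integral_Ioi_rpow_of_lt (by norm_num) one_pos]
  norm_num

lemma integrableOn_inv_mul_inv_mul {f : ℝ → ℝ} (hf : Measurable f) {C : ℝ}
    (hC : ∀ y, |f y| ≤ C) : IntegrableOn (fun y => y⁻¹ * (y⁻¹ * f y)) (Ioi 1) := by
  simp_rw [← mul_assoc]
  exact integrableOn_inv_mul_inv.mul_bdd hf.aestronglyMeasurable (ae_of_all _ hC)

lemma integral_inv_mul_inv_mul (c : ℝ) : ∫ y in Ioi (1 : ℝ), y⁻¹ * (y⁻¹ * c) = c := by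
  simp_rw [← mul_assoc]
  rw [integral_mul_const, integral_inv_mul_inv, one_mul]

lemma integrableOn_and_integral_eq_zero_of_integral_inv_mul_inv_add {g : ℝ → ℝ}
    (h : ∫ x in Ioi (1 : ℝ), (x⁻¹ * x⁻¹ + g x) = 1) :
    IntegrableOn g (Ioi 1) ∧ ∫ x in Ioi (1 : ℝ), g x = 0 := by
  have hint : IntegrableOn (fun x => x⁻¹ * x⁻¹ + g x) (Ioi 1) :=
    Integrable.of_integral_ne_zero (by rw [h]; exact one_ne_zero)
  have hg : IntegrableOn g (Ioi 1) := by
    refine (hint.sub integrableOn_inv_mul_inv).congr_fun (fun x _ => ?_) measurableSet_Ioi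
    simp
  refine ⟨hg, ?_⟩
  rwa [integral_add integrableOn_inv_mul_inv hg, integral_inv_mul_inv, add_eq_left] at h

end Weight

section ConjExponent

lemma conjExponent_mem_Ioi {s : ℝ} (hs : s ∈ Ioi 1) : Real.conjExponent s ∈ Ioi 1 :=
  (Real.HolderConjugate.conjExponent hs).symm.lt

lemma conjExponent_conjExponent {s : ℝ} (hs : s ∈ Ioi 1) :
    Real.conjExponent (Real.conjExponent s) = s :=
  (Real.HolderConjugate.conjExponent hs).symm.conjExponent_eq

lemma image_conjExponent_Ioi : Real.conjExponent '' Ioi 1 = Ioi 1 :=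
  (mapsTo_iff_image_subset.1 fun _ => conjExponent_mem_Ioi).antisymm fun _ hs =>
    ⟨_, conjExponent_mem_Ioi hs, conjExponent_conjExponent hs⟩

lemma injOn_conjExponent : InjOn Real.conjExponent (Ioi 1) := fun a ha b hb hab => by
  rw [← conjExponent_conjExponent ha, hab, conjExponent_conjExponent hb]

lemma hasDerivAt_conjExponent {s : ℝ} (hs : s ≠ 1) :
    HasDerivAt Real.conjExponent (-((s - 1) ^ 2)⁻¹) s := by
  refine ((hasDerivAt_id' s).div ((hasDerivAt_id' s).sub_const 1)
    (sub_ne_zero.2 hs)).congr_deriv ?_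
  field_simp [sub_ne_zero.2 hs]
  ring

lemma abs_deriv_mul_comp_conjExponent (f : ℝ → ℝ) {s : ℝ} (hs : s ∈ Ioi 1) :
    |-((s - 1) ^ 2)⁻¹| • ((Real.conjExponent s)⁻¹ * f (1 - (Real.conjExponent s)⁻¹)) =
      (s * (s - 1))⁻¹ * f s⁻¹ := by
  have h := Real.HolderConjugate.conjExponent hs
  have := h.sub_one_pos
  have := h.ne_zero
  rw [h.symm.one_sub_inv, Real.conjExponent, abs_neg, abs_of_pos (by positivity), smul_eq_mul,
    inv_div, ← mul_assoc]
  field_simp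

/- The substitution `x = s / (s - 1)` turns `1 - x⁻¹` into `s⁻¹`. -/

lemma integrableOn_inv_mul_comp_one_sub_inv_iff (f : ℝ → ℝ) :
    IntegrableOn (fun x => x⁻¹ * f (1 - x⁻¹)) (Ioi 1) ↔
      IntegrableOn (fun s => (s * (s - 1))⁻¹ * f s⁻¹) (Ioi 1) := by
  nth_rw 1 [← image_conjExponent_Ioi]
  rw [integrableOn_image_iff_integrableOn_abs_deriv_smul measurableSet_Ioi
    (fun s hs => (hasDerivAt_conjExponent (ne_of_gt hs)).hasDerivWithinAt) injOn_conjExponent]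
  exact integrableOn_congr_fun (fun s hs => abs_deriv_mul_comp_conjExponent f hs)
    measurableSet_Ioi

lemma integral_inv_mul_comp_one_sub_inv (f : ℝ → ℝ) :
    ∫ x in Ioi (1 : ℝ), x⁻¹ * f (1 - x⁻¹) = ∫ s in Ioi (1 : ℝ), (s * (s - 1))⁻¹ * f s⁻¹ := by
  rw [← image_conjExponent_Ioi, integral_image_eq_integral_abs_deriv_smul measurableSet_Ioi
    (fun s hs => (hasDerivAt_conjExponent (ne_of_gt hs)).hasDerivWithinAt) injOn_conjExponent,
    image_conjExponent_Ioi]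
  exact setIntegral_congr_fun measurableSet_Ioi fun s hs => abs_deriv_mul_comp_conjExponent f hs

end ConjExponent

section Moments

variable {G : ℝ → ℝ} {κ p₀ : ℝ}

lemma ae_eq_zero_of_moments_eq_zero (hκ : κ ≠ 0)
    (hint₁ : IntegrableOn (fun s => s⁻¹ * G s) (Ioi 1))
    (hint₂ : IntegrableOn (fun s => (s * (s - 1))⁻¹ * G s) (Ioi 1))
    (h₁ : ∫ s in Ioi (1 : ℝ), s⁻¹ * G s = 0)
    (h₂ : ∫ s in Ioi (1 : ℝ), (s * (s - 1))⁻¹ * G s = 0)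
    (hsign : ∀ s ∈ Ioi (1 : ℝ), 0 ≤ κ * (s⁻¹ - p₀) * G s) :
    ∀ᵐ s ∂volume.restrict (Ioi 1), G s = 0 := by
  have hcomb : EqOn (fun s => (s - 1)⁻¹ * (κ * (s⁻¹ - p₀) * G s))
      (fun s => κ * (1 - p₀) * ((s * (s - 1))⁻¹ * G s) - κ * p₀ * (s⁻¹ * G s)) (Ioi 1) := by
    intro s hs
    have : s - 1 ≠ 0 := sub_ne_zero.2 (ne_of_gt hs)
    have : s ≠ 0 := (one_pos.trans hs).ne'
    field_simp
    ring
  have hmem := ae_restrict_mem (μ := volume) (measurableSet_Ioi (a := (1 : ℝ)))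
  have hu : ∀ᵐ s ∂volume.restrict (Ioi 1), κ * (s⁻¹ - p₀) * G s = 0 := by
    refine ae_eq_zero_of_integral_mul_eq_zero (hmem.mono fun s hs => inv_pos.2 (sub_pos.2 hs))
      (hmem.mono hsign) ?_ ?_
    · refine IntegrableOn.congr_fun ?_ hcomb.symm measurableSet_Ioi
      exact (hint₂.const_mul _).sub (hint₁.const_mul _)
    · rw [setIntegral_congr_fun measurableSet_Ioi hcomb, integral_sub (hint₂.const_mul _)
        (hint₁.const_mul _), integral_const_mul, integral_const_mul, h₁, h₂]
      ring
  filter_upwards [hu, ae_restrict_of_ae (ae_inv_notMem (finite_singleton p₀))] with s hs hp₀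
  exact (mul_eq_zero.1 hs).resolve_left (mul_ne_zero hκ (sub_ne_zero.2 hp₀))

lemma ae_eq_zero_of_integrals_eq_one (hκ : κ ≠ 0)
    (hsign : ∀ s ∈ Ioi (1 : ℝ), 0 ≤ κ * (s⁻¹ - p₀) * G s⁻¹)
    (hI : ∫ x in Ioi (1 : ℝ), (x⁻¹ * x⁻¹ + x⁻¹ * G x⁻¹) = 1)
    (hĨ : ∫ x in Ioi (1 : ℝ), (x⁻¹ * x⁻¹ - x⁻¹ * G (1 - x⁻¹)) = 1) :
    ∀ᵐ s ∂volume.restrict (Ioi 1), G s⁻¹ = 0 := by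
  obtain ⟨hint₁, h₁⟩ := integrableOn_and_integral_eq_zero_of_integral_inv_mul_inv_add hI
  obtain ⟨hint₂, h₂⟩ := integrableOn_and_integral_eq_zero_of_integral_inv_mul_inv_add
    (g := fun x => -(x⁻¹ * G (1 - x⁻¹))) (by simpa only [← sub_eq_add_neg] using hĨ)
  rw [integral_neg, neg_eq_zero, integral_inv_mul_comp_one_sub_inv] at h₂
  exact ae_eq_zero_of_moments_eq_zero hκ hint₁ ((integrableOn_inv_mul_comp_one_sub_inv_iff G).1
    (by simpa only [Pi.neg_def, neg_neg] using hint₂.neg)) h₁ h₂ hsign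

end Moments

section PsiMap

lemma mul_inv_rpow_sub_one_nonpos {y : ℝ} (hy : 1 < y) (ρ : ℝ) : ρ * (y⁻¹ ^ ρ - 1) ≤ 0 := by
  have hy₀ : 0 < y⁻¹ := inv_pos.2 (one_pos.trans hy)
  have hy₁ : y⁻¹ ≤ 1 := inv_le_one_of_one_le₀ hy.le
  rcases le_total 0 ρ with hρ | hρ
  · exact mul_nonpos_of_nonneg_of_nonpos hρ (sub_nonpos.2 (Real.rpow_le_one hy₀.le hy₁ hρ))
  · exact mul_nonpos_of_nonpos_of_nonneg hρ
      (sub_nonneg.2 (Real.one_le_rpow_of_pos_of_le_one_of_nonpos hy₀ hy₁ hρ))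

lemma tendsto_inv_rpow_of_pos {ρ : ℝ} (hρ : 0 < ρ) :
    Tendsto (fun y : ℝ => y⁻¹ ^ ρ) atTop (𝓝 0) := by
  refine (tendsto_inv_atTop_zero.comp (tendsto_rpow_atTop hρ)).congr' ?_
  filter_upwards [eventually_ge_atTop 0] with y hy
  exact (Real.inv_rpow hy ρ).symm

lemma tendsto_inv_rpow_of_neg {ρ : ℝ} (hρ : ρ < 0) :
    Tendsto (fun y : ℝ => y⁻¹ ^ ρ) atTop atTop := by
  refine (tendsto_rpow_atTop (neg_pos.2 hρ)).congr' ?_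
  filter_upwards [eventually_gt_atTop 0] with y hy
  rw [Real.inv_rpow hy.le, Real.rpow_neg hy.le]

/-- `psiMap ρ D y t = ψ₁(1/y) t + ψ₂(1/y)`. -/
def psiMap (ρ D y t : ℝ) : ℝ :=
  y⁻¹ ^ ρ * t + (if ρ = 0 then D * Real.log y⁻¹ else D * (y⁻¹ ^ ρ - 1) / ρ)

lemma measurable_psiMap (ρ D t : ℝ) : Measurable fun y => psiMap ρ D y t := by
  unfold psiMap
  measurability

lemma psiMap_zero (D y t : ℝ) : psiMap 0 D y t = t - D * Real.log y := by
  rw [psiMap, if_pos rfl, Real.rpow_zero, Real.log_inv]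
  ring

variable {ρ D : ℝ}

lemma psiMap_of_ne_zero (hρ : ρ ≠ 0) (y t : ℝ) :
    psiMap ρ D y t = y⁻¹ ^ ρ * (t - -D / ρ) + -D / ρ := by
  rw [psiMap, if_neg hρ]
  field_simp
  ring

lemma tendsto_psiMap (hρD : ¬(ρ = 0 ∧ D = 0)) (t : ℝ) :
    Tendsto (fun y => psiMap ρ D y t) atTop atBot ∨
      Tendsto (fun y => psiMap ρ D y t) atTop atTop ∨
      Tendsto (fun y => psiMap ρ D y t) atTop (𝓝 (-D / ρ)) := by
  rcases lt_trichotomy ρ 0 with hρ | rfl | hρ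
  · simp_rw [psiMap_of_ne_zero hρ.ne]
    have hpow := tendsto_inv_rpow_of_neg hρ
    rcases lt_trichotomy (t - -D / ρ) 0 with ht | ht | ht
    · exact .inl (tendsto_atBot_add_const_right _ _ (hpow.atTop_mul_const_of_neg ht))
    · simp only [ht, mul_zero, zero_add]
      exact .inr (.inr tendsto_const_nhds)
    · exact .inr (.inl (tendsto_atTop_add_const_right _ _ (hpow.atTop_mul_const ht)))
  · have hD : D ≠ 0 := fun hD => hρD ⟨rfl, hD⟩
    simp_rw [psiMap_zero, sub_eq_add_neg, ← neg_mul]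
    rcases hD.lt_or_gt with hD | hD
    · exact .inr (.inl (tendsto_atTop_add_const_left _ _
        (Real.tendsto_log_atTop.const_mul_atTop (neg_pos.2 hD))))
    · exact .inl (tendsto_atBot_add_const_left _ _
        (Real.tendsto_log_atTop.const_mul_atTop_of_neg (neg_neg_iff_pos.2 hD)))
  · simp_rw [psiMap_of_ne_zero hρ.ne']
    refine .inr (.inr ?_)
    simpa using ((tendsto_inv_rpow_of_pos hρ).mul_const (t - -D / ρ)).add_const (-D / ρ)

end PsiMap

def defect (H : ℝ → ℝ) (ρ D t : ℝ) : ℝ :=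
  ∫ y in Ioi (1 : ℝ), y⁻¹ * (y⁻¹ * (H (psiMap ρ D y t) - H t))

section Defect

variable {H : ℝ → ℝ} {ρ D : ℝ}

lemma defect_zero_zero (t : ℝ) : defect H 0 0 t = 0 := by
  simp [defect, psiMap_zero]

/- For `ρ ≠ 0`, `-D/ρ` is the common fixed point of the affine maps `t ↦ psiMap ρ D y t`. -/
lemma exists_mul_sub_mul_apply_psiMap_sub_nonneg (hmono : Monotone H)
    (h0 : Tendsto H atBot (𝓝 0)) (hρD : ¬(ρ = 0 ∧ D = 0)) :
    ∃ κ p₀ : ℝ, κ ≠ 0 ∧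
      ∀ t, ∀ y ∈ Ioi (1 : ℝ), 0 ≤ κ * (H t - p₀) * (H (psiMap ρ D y t) - H t) := by
  by_cases hρ : ρ = 0
  · subst hρ
    refine ⟨-D, 0, neg_ne_zero.2 fun hD => hρD ⟨rfl, hD⟩, fun t y hy => ?_⟩
    have hshift : 0 ≤ -D * (psiMap 0 D y t - t) := by
      rw [psiMap_zero]
      nlinarith [mul_nonneg (sq_nonneg D) (Real.log_pos hy).le]
    rw [sub_zero, mul_right_comm]
    exact mul_nonneg (hmono.mul_sub_nonneg hshift) (hmono.le_of_tendsto h0 t)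
  · refine ⟨-ρ, H (-D / ρ), neg_ne_zero.2 hρ, fun t y hy => hmono.mul_sub_mul_sub_nonneg ?_⟩
    have hshift : psiMap ρ D y t - t = (y⁻¹ ^ ρ - 1) * (t - -D / ρ) := by
      rw [psiMap_of_ne_zero hρ]
      ring
    rw [hshift]
    nlinarith [mul_inv_rpow_sub_one_nonpos hy ρ, sq_nonneg (t - -D / ρ)]

lemma mul_defect_nonneg {m t : ℝ}
    (h : ∀ y ∈ Ioi (1 : ℝ), 0 ≤ m * (H (psiMap ρ D y t) - H t)) :
    0 ≤ m * defect H ρ D t := by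
  rw [defect, ← integral_const_mul]
  refine setIntegral_nonneg measurableSet_Ioi fun y hy => ?_
  have hy₀ : 0 ≤ y⁻¹ := inv_nonneg.2 (one_pos.trans hy).le
  calc 0 ≤ y⁻¹ * (y⁻¹ * (m * (H (psiMap ρ D y t) - H t))) := by
        have := h y hy
        positivity
    _ = _ := by ring

lemma integrableOn_inv_mul_inv_mul_apply_psiMap_sub (hmono : Monotone H)
    (h0 : Tendsto H atBot (𝓝 0)) (h1 : Tendsto H atTop (𝓝 1)) (ρ D t : ℝ) :
    IntegrableOn (fun y => y⁻¹ * (y⁻¹ * (H (psiMap ρ D y t) - H t))) (Ioi 1) :=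
  integrableOn_inv_mul_inv_mul ((hmono.measurable.comp (measurable_psiMap ρ D t)).sub
    measurable_const) fun _ => abs_apply_sub_le_one hmono h0 h1 _ t

lemma integral_inv_mul_inv_mul_apply_psiMap (hmono : Monotone H)
    (h0 : Tendsto H atBot (𝓝 0)) (h1 : Tendsto H atTop (𝓝 1)) (t : ℝ) :
    ∫ y in Ioi (1 : ℝ), y⁻¹ * (y⁻¹ * H (psiMap ρ D y t)) = H t + defect H ρ D t := by
  have h := integral_add (integrableOn_inv_mul_inv_mul (measurable_const (a := H t))
    fun _ => le_rfl) (integrableOn_inv_mul_inv_mul_apply_psiMap_sub hmono h0 h1 ρ D t)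
  rw [integral_inv_mul_inv_mul] at h
  rw [defect, ← h]
  congr 1 with y
  ring

lemma integral_inv_mul_inv_mul_one_sub_apply_psiMap (hmono : Monotone H)
    (h0 : Tendsto H atBot (𝓝 0)) (h1 : Tendsto H atTop (𝓝 1)) (t : ℝ) :
    ∫ y in Ioi (1 : ℝ), y⁻¹ * (y⁻¹ * (1 - H (psiMap ρ D y t))) = 1 - H t - defect H ρ D t := by
  have h := integral_sub (integrableOn_inv_mul_inv_mul (measurable_const (a := 1 - H t))
    fun _ => le_rfl) (integrableOn_inv_mul_inv_mul_apply_psiMap_sub hmono h0 h1 ρ D t)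
  rw [integral_inv_mul_inv_mul] at h
  rw [defect, ← h]
  congr 1 with y
  ring

lemma apply_eq_of_defect_eq_zero (hmono : Monotone H) (h0 : Tendsto H atBot (𝓝 0))
    (h1 : Tendsto H atTop (𝓝 1)) {m t L : ℝ} (hm : m ≠ 0)
    (hsign : ∀ y ∈ Ioi (1 : ℝ), 0 ≤ m * (H (psiMap ρ D y t) - H t))
    (hzero : defect H ρ D t = 0)
    (hL : Tendsto (fun y => H (psiMap ρ D y t)) atTop (𝓝 L)) : H t = L := by
  have hmem := ae_restrict_mem (μ := volume) (measurableSet_Ioi (a := (1 : ℝ)))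
  have hae : ∀ᵐ y ∂volume.restrict (Ioi 1), m * (H (psiMap ρ D y t) - H t) = 0 := by
    refine ae_eq_zero_of_integral_mul_eq_zero (w := fun y => y⁻¹ * y⁻¹)
      (hmem.mono fun y hy => by have : (0 : ℝ) < y := one_pos.trans hy; positivity)
      (hmem.mono hsign) ?_ ?_
    · refine IntegrableOn.congr_fun
        ((integrableOn_inv_mul_inv_mul_apply_psiMap_sub hmono h0 h1 ρ D t).const_mul m)
        (fun y _ => ?_) measurableSet_Ioi
      ring
    · simp_rw [mul_assoc, mul_left_comm _ m, integral_const_mul]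
      rw [← defect, hzero, mul_zero]
  refine tendsto_nhds_unique_of_frequently_eq tendsto_const_nhds hL ?_
  refine frequently_atTop_of_ae_restrict_Ioi (hae.mono fun y hy => ?_)
  linarith [(mul_eq_zero.1 hy).resolve_left hm]

lemma exists_tendsto_apply_psiMap (hcont : Continuous H) (h0 : Tendsto H atBot (𝓝 0))
    (h1 : Tendsto H atTop (𝓝 1)) (hρD : ¬(ρ = 0 ∧ D = 0)) (t : ℝ) :
    ∃ L ∈ ({0, 1, H (-D / ρ)} : Set ℝ), Tendsto (fun y => H (psiMap ρ D y t)) atTop (𝓝 L) := by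
  rcases tendsto_psiMap hρD t with h | h | h
  · exact ⟨0, by simp, h0.comp h⟩
  · exact ⟨1, by simp, h1.comp h⟩
  · exact ⟨H (-D / ρ), by simp, (hcont.tendsto _).comp h⟩

lemma integral_inv_mul_integral_apply_psiMap_leftInv_inv (hmono : Monotone H)
    (hcont : Continuous H) (h0 : Tendsto H atBot (𝓝 0)) (h1 : Tendsto H atTop (𝓝 1)) :
    ∫ x in Ioi (1 : ℝ), x⁻¹ * ∫ y in Ioi (1 : ℝ), y⁻¹ * (y⁻¹ * H (psiMap ρ D y (leftInv H x⁻¹))) =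
      ∫ x in Ioi (1 : ℝ), (x⁻¹ * x⁻¹ + x⁻¹ * defect H ρ D (leftInv H x⁻¹)) := by
  refine setIntegral_congr_fun measurableSet_Ioi fun x hx => ?_
  rw [integral_inv_mul_inv_mul_apply_psiMap hmono h0 h1, apply_leftInv hmono hcont h0 h1
    ⟨inv_pos.2 (one_pos.trans hx), inv_lt_one_of_one_lt₀ hx⟩, mul_add]

lemma integral_inv_mul_integral_one_sub_apply_psiMap_leftInv_one_sub_inv (hmono : Monotone H)
    (hcont : Continuous H) (h0 : Tendsto H atBot (𝓝 0)) (h1 : Tendsto H atTop (𝓝 1)) :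
    ∫ x in Ioi (1 : ℝ), x⁻¹ *
        ∫ y in Ioi (1 : ℝ), y⁻¹ * (y⁻¹ * (1 - H (psiMap ρ D y (leftInv H (1 - x⁻¹))))) =
      ∫ x in Ioi (1 : ℝ), (x⁻¹ * x⁻¹ - x⁻¹ * defect H ρ D (leftInv H (1 - x⁻¹))) := by
  refine setIntegral_congr_fun measurableSet_Ioi fun x hx => ?_
  have hx' : x⁻¹ ∈ Ioo 0 1 := ⟨inv_pos.2 (one_pos.trans hx), inv_lt_one_of_one_lt₀ hx⟩
  rw [integral_inv_mul_inv_mul_one_sub_apply_psiMap hmono h0 h1, apply_leftInv hmono hcont h0 h1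
    ⟨sub_pos.2 hx'.2, sub_lt_self 1 hx'.1⟩]
  ring

end Defect

/-- The deterministic core of Proposition 2.3: for a continuous probability distribution
function `H`, `ψ₁(c) = c^ρ` and `ψ₂(c) = D log c` (if `ρ = 0`) or `D(c^ρ - 1)/ρ` (if `ρ ≠ 0`),
the integrals
`I = ∫_1^∞ ∫_1^∞ y⁻¹ H(ψ₁(1/y) H^←(1/x) + ψ₂(1/y)) (dx/x)(dy/y)` and
`Ĩ = ∫_1^∞ ∫_1^∞ y⁻¹ [1 - H(ψ₁(1/y) H^←(1 - 1/x) + ψ₂(1/y))] (dx/x)(dy/y)`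
are both equal to `1` if and only if `ρ = 0` and `D = 0`. -/
theorem integrals_one_iff_product
    (H : ℝ → ℝ) (hmono : Monotone H) (hcont : Continuous H)
    (h0 : Tendsto H atBot (nhds 0)) (h1 : Tendsto H atTop (nhds 1))
    (ρ D : ℝ) :
    ((∫ x in Set.Ioi (1 : ℝ), x⁻¹ * ∫ y in Set.Ioi (1 : ℝ), y⁻¹ *
        (y⁻¹ * H (y⁻¹ ^ ρ * leftInv H x⁻¹ +
          (if ρ = 0 then D * Real.log y⁻¹ else D * (y⁻¹ ^ ρ - 1) / ρ)))) = 1 ∧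
     (∫ x in Set.Ioi (1 : ℝ), x⁻¹ * ∫ y in Set.Ioi (1 : ℝ), y⁻¹ *
        (y⁻¹ * (1 - H (y⁻¹ ^ ρ * leftInv H (1 - x⁻¹) +
          (if ρ = 0 then D * Real.log y⁻¹ else D * (y⁻¹ ^ ρ - 1) / ρ))))) = 1)
    ↔ (ρ = 0 ∧ D = 0) := by
  simp only [← psiMap.eq_1]
  rw [integral_inv_mul_integral_apply_psiMap_leftInv_inv hmono hcont h0 h1,
    integral_inv_mul_integral_one_sub_apply_psiMap_leftInv_one_sub_inv hmono hcont h0 h1]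
  refine ⟨fun ⟨hI, hĨ⟩ => ?_, fun ⟨hρ, hD⟩ => ?_⟩
  · by_contra hρD
    obtain ⟨κ, p₀, hκ, hsign⟩ := exists_mul_sub_mul_apply_psiMap_sub_nonneg hmono h0 hρD
    have hleftInv : ∀ s ∈ Ioi (1 : ℝ), H (leftInv H s⁻¹) = s⁻¹ := fun s hs =>
      apply_leftInv hmono hcont h0 h1 ⟨inv_pos.2 (one_pos.trans hs), inv_lt_one_of_one_lt₀ hs⟩
    have hzero := ae_eq_zero_of_integrals_eq_one (G := fun p => defect H ρ D (leftInv H p)) hκ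
      (fun s hs => hleftInv s hs ▸ mul_defect_nonneg (hsign (leftInv H s⁻¹))) hI hĨ
    have hS := ae_restrict_of_ae (μ := volume) (s := Ioi 1)
      (ae_inv_notMem ((toFinite {0, 1, H (-D / ρ)}).insert p₀))
    obtain ⟨s, hs, hzero_s, hS_s⟩ := (frequently_atTop_of_ae_restrict_Ioi
      ((ae_restrict_mem measurableSet_Ioi).and (hzero.and hS))).exists
    obtain ⟨L, hL, hlim⟩ := exists_tendsto_apply_psiMap hcont h0 h1 hρD (leftInv H s⁻¹)
    have hp₀ : s⁻¹ - p₀ ≠ 0 := sub_ne_zero.2 fun h => hS_s (.inl h)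
    have hHL := apply_eq_of_defect_eq_zero hmono h0 h1 (mul_ne_zero hκ hp₀)
      (by simpa only [hleftInv s hs] using hsign (leftInv H s⁻¹)) hzero_s hlim
    exact hS_s (.inr (hleftInv s hs ▸ hHL ▸ hL))
  · subst hρ hD
    simp [defect_zero_zero, integral_inv_mul_inv]
end
end

section
/- Let 0 < ρ < 1 and let X and Z be independent random variables with P(X > t) = t^{−ρ} and P(Z > t) = t^{−(1−ρ)} for t ≥ 1, and set Y = X ∧ Z. Then for every x ≥ y > 0 and every t > 0 with ty ≥ 1, t·P(X ≤ tx, Y > ty) = y^{−(1−ρ)}(y^{−ρ} − x^{−ρ}) = (1/y)(1 − (y/x)^ρ). In particular, (X,Y) follows a CEV model with standardized limit measure μ*([0,x] × (y,∞]) = (1/y)(1 − (y/x)^ρ) for x ≥ y > 0, which is not a product measure. -/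
open MeasureTheory ProbabilityTheory Filter Set

noncomputable section

/-- Example 3.2: let `0 < ρ < 1`, let `X ~ Pareto(ρ)` and `Z ~ Pareto(1-ρ)` be independent
and `Y = X ∧ Z`. Then for `x ≥ y > 0` and `t > 0` with `ty ≥ 1`,
`t · P(X ≤ tx, Y > ty) = y^{-(1-ρ)}(y^{-ρ} - x^{-ρ}) = (1/y)(1 - (y/x)^ρ)`; in particular
`(X,Y)` follows a CEV model with standardized limit measure
`μ*([0,x] × (y,∞]) = (1/y)(1 - (y/x)^ρ)` for `x ≥ y > 0` (and `0` for `0 < x < y`),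
which is not a product measure. -/
theorem pareto_min_cev
    {Ω : Type*} [MeasurableSpace Ω] (P : Measure Ω) [IsProbabilityMeasure P]
    (ρ : ℝ) (hρ0 : 0 < ρ) (hρ1 : ρ < 1)
    (X Z : Ω → ℝ) (hX : Measurable X) (hZ : Measurable Z)
    (hindep : IndepFun X Z P)
    (hparX : ∀ t : ℝ, 1 ≤ t → (P {ω | t < X ω}).toReal = t ^ (-ρ))
    (hparZ : ∀ t : ℝ, 1 ≤ t → (P {ω | t < Z ω}).toReal = t ^ (-(1 - ρ))) :
    (∀ t x y : ℝ, 0 < t → 0 < y → y ≤ x → 1 ≤ t * y →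
      t * (P {ω | X ω ≤ t * x ∧ t * y < min (X ω) (Z ω)}).toReal
        = y ^ (-(1 - ρ)) * (y ^ (-ρ) - x ^ (-ρ)) ∧
      t * (P {ω | X ω ≤ t * x ∧ t * y < min (X ω) (Z ω)}).toReal
        = y⁻¹ * (1 - (y / x) ^ ρ)) ∧
    (∀ x y : ℝ, 0 < y → y ≤ x →
      Tendsto (fun t : ℝ =>
          t * (P {ω | X ω ≤ t * x ∧ t * y < min (X ω) (Z ω)}).toReal)
        atTop (nhds (y⁻¹ * (1 - (y / x) ^ ρ)))) ∧
    ¬ ∃ F : ℝ → ℝ, ∀ x y : ℝ, 0 < x → 0 < y →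
        (if y ≤ x then y⁻¹ * (1 - (y / x) ^ ρ) else 0) = F x * y⁻¹ := by
  -- second form of the limit expression equals first form
  have hform : ∀ x y : ℝ, 0 < y → y ≤ x →
      y ^ (-(1 - ρ)) * (y ^ (-ρ) - x ^ (-ρ)) = y⁻¹ * (1 - (y / x) ^ ρ) := by
    intro x y hy hyx
    have hx : 0 < x := lt_of_lt_of_le hy hyx
    have e2 : (y / x) ^ ρ = y ^ ρ * x ^ (-ρ) := by
      rw [Real.div_rpow hy.le hx.le, Real.rpow_neg hx.le, div_eq_mul_inv]
    have e3 : y ^ (-(1 - ρ)) = y⁻¹ * y ^ ρ := by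
      rw [show -(1 - ρ) = -1 + ρ by ring, Real.rpow_add hy, Real.rpow_neg_one]
    have e4 : y ^ ρ * y ^ (-ρ) = 1 := by
      rw [← Real.rpow_add hy]; simp
    rw [e3, e2]
    linear_combination y⁻¹ * e4
  -- the key computation
  have key : ∀ t x y : ℝ, 0 < t → 0 < y → y ≤ x → 1 ≤ t * y →
      t * (P {ω | X ω ≤ t * x ∧ t * y < min (X ω) (Z ω)}).toReal
        = y ^ (-(1 - ρ)) * (y ^ (-ρ) - x ^ (-ρ)) := by
    intro t x y ht hy hyx hty
    have hx : 0 < x := lt_of_lt_of_le hy hyx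
    set s := t * y with hs
    set u := t * x with hu
    have hsu : s ≤ u := by
      apply mul_le_mul_of_nonneg_left hyx ht.le
    have htu : 1 ≤ u := le_trans hty hsu
    have hset : {ω | X ω ≤ t * x ∧ t * y < min (X ω) (Z ω)}
        = (X ⁻¹' Set.Ioc s u) ∩ (Z ⁻¹' Set.Ioi s) := by
      ext ω
      simp only [Set.mem_setOf_eq, Set.mem_inter_iff, Set.mem_preimage, Set.mem_Ioc,
        Set.mem_Ioi, lt_min_iff, ← hs, ← hu]
      tauto
    have hmul : P ((X ⁻¹' Set.Ioc s u) ∩ (Z ⁻¹' Set.Ioi s))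
        = P (X ⁻¹' Set.Ioc s u) * P (Z ⁻¹' Set.Ioi s) :=
      hindep.measure_inter_preimage_eq_mul _ _ measurableSet_Ioc measurableSet_Ioi
    have hIoc : X ⁻¹' Set.Ioc s u = (X ⁻¹' Set.Ioi s) \ (X ⁻¹' Set.Ioi u) := by
      rw [← Set.preimage_diff, Set.Ioi_diff_Ioi]
    have hPAioc : (P (X ⁻¹' Set.Ioc s u)).toReal = s ^ (-ρ) - u ^ (-ρ) := by
      rw [hIoc, measure_diff (Set.preimage_mono (Set.Ioi_subset_Ioi hsu))
        ((hX measurableSet_Ioi).nullMeasurableSet) (measure_ne_top P _)]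
      rw [ENNReal.toReal_sub_of_le
        (measure_mono (Set.preimage_mono (Set.Ioi_subset_Ioi hsu))) (measure_ne_top P _)]
      have h1 : (P (X ⁻¹' Set.Ioi s)).toReal = s ^ (-ρ) := hparX s hty
      have h2 : (P (X ⁻¹' Set.Ioi u)).toReal = u ^ (-ρ) := hparX u htu
      rw [h1, h2]
    have hPB : (P (Z ⁻¹' Set.Ioi s)).toReal = s ^ (-(1 - ρ)) := hparZ s hty
    rw [hset, hmul, ENNReal.toReal_mul, hPAioc, hPB]
    have hty' : (t * y) ^ (-ρ) = t ^ (-ρ) * y ^ (-ρ) := Real.mul_rpow ht.le hy.le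
    have htx' : (t * x) ^ (-ρ) = t ^ (-ρ) * x ^ (-ρ) := Real.mul_rpow ht.le hx.le
    have hty'' : (t * y) ^ (-(1 - ρ)) = t ^ (-(1 - ρ)) * y ^ (-(1 - ρ)) :=
      Real.mul_rpow ht.le hy.le
    have htt : t * t ^ (-ρ) * t ^ (-(1 - ρ)) = 1 := by
      nth_rewrite 1 [← Real.rpow_one t]
      rw [← Real.rpow_add ht, ← Real.rpow_add ht,
        show (1 : ℝ) + -ρ + -(1 - ρ) = 0 by ring, Real.rpow_zero]
    rw [hs, hu, hty', htx', hty'']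
    linear_combination (y ^ (-(1 - ρ)) * (y ^ (-ρ) - x ^ (-ρ))) * htt
  refine ⟨fun t x y ht hy hyx hty => ⟨key t x y ht hy hyx hty, ?_⟩, ?_, ?_⟩
  · rw [key t x y ht hy hyx hty, hform x y hy hyx]
  · intro x y hy hyx
    apply Tendsto.congr' (f₁ := fun _ : ℝ => y⁻¹ * (1 - (y / x) ^ ρ))
    · filter_upwards [eventually_ge_atTop (max 1 y⁻¹)] with t ht
      have ht1 : (1 : ℝ) ≤ t := le_trans (le_max_left _ _) ht
      have ht0 : 0 < t := lt_of_lt_of_le one_pos ht1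
      have hty : 1 ≤ t * y := by
        have : y⁻¹ ≤ t := le_trans (le_max_right _ _) ht
        calc (1 : ℝ) = y⁻¹ * y := by field_simp
        _ ≤ t * y := by apply mul_le_mul_of_nonneg_right this hy.le
      rw [key t x y ht0 hy hyx hty, hform x y hy hyx]
    · exact tendsto_const_nhds
  · rintro ⟨F, hF⟩
    have h1 := hF 1 2 one_pos two_pos
    rw [if_neg (by norm_num)] at h1
    have hF1 : F 1 = 0 := by linarith [h1]
    have h2 := hF 1 (1/2) one_pos (by norm_num)
    rw [if_pos (by norm_num)] at h2
    have hlt : ((1 : ℝ)/2) ^ ρ < 1 :=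
      Real.rpow_lt_one (by norm_num) (by norm_num) hρ0
    rw [hF1] at h2
    norm_num at h2
    linarith
end
end
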